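/- For every integer d > 0, the index of the subgroup B·K_d in K equals (q+1)·q^{d−1}. -/

import Mathlib

open Matrix
open scoped Pointwise

noncomputable section

/-- Ambient data for the paper: `E` is the unramified quadratic extension `F(√ε)` of a
nonarchimedean local field `F` of odd residual characteristic.  The field `F` is realized
as the fixed field of the nontrivial `F`-automorphism `σ` of `E`; `ν` is the discrete
valuation of `E` (extending the valuation of `F` normalized by `ν ϖ = 1` at a uniformizer
`ϖ` of `F`, and still surjecting onto `ℤ` since `E/F` is unramified); `q` is the (odd)
cardinality of the residue field of `F` (so `q²` is that of `E`); `ε ∈ O_F^×` is a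
non-square unit and `sqε = √ε` generates `E` over `F`.  The standard facts about the
norm map and squares are included as fields. -/
structure Setting (E : Type*) [Field E] where
  /-- the nontrivial `F`-automorphism of `E`, written `x̄ = σ x` -/
  σ : E →+* E
  σσ : ∀ x, σ (σ x) = x
  σ_ne_id : σ ≠ RingHom.id E
  /-- the valuation (only its values at nonzero elements matter) -/
  ν : E → ℤ
  ν_mul : ∀ {x y : E}, x ≠ 0 → y ≠ 0 → ν (x * y) = ν x + ν y
  ν_add : ∀ {x y : E}, x ≠ 0 → y ≠ 0 → x + y ≠ 0 → min (ν x) (ν y) ≤ ν (x + y)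
  ν_σ : ∀ x, ν (σ x) = ν x
  ν_surj : ∀ n : ℤ, ∃ x : E, x ≠ 0 ∧ ν x = n
  /-- a uniformizer of `F` -/
  ϖ : E
  ϖ_ne_zero : ϖ ≠ 0
  ϖ_fixed : σ ϖ = ϖ
  ν_ϖ : ν ϖ = 1
  /-- the residual cardinality of `F` -/
  q : ℕ
  q_odd : Odd q
  one_lt_q : 1 < q
  /-- a non-square unit of `O_F` -/
  ε : E
  ε_fixed : σ ε = ε
  ε_ne_zero : ε ≠ 0
  ν_ε : ν ε = 0
  ε_nonsquare : ¬ ∃ f : E, σ f = f ∧ f * f = ε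
  /-- a square root `√ε ∈ E` of `ε` -/
  sqε : E
  sqε_sq : sqε * sqε = ε
  sqε_conj : σ sqε = -sqε
  /-- `E = F(√ε)` -/
  generates : ∀ x : E, ∃ a b : E, σ a = a ∧ σ b = b ∧ x = a + b * sqε
  /-- the norm maps `O_E^×` onto `O_F^×` -/
  norm_surj_units : ∀ y : E, σ y = y → y ≠ 0 → ν y = 0 →
    ∃ x : E, x ≠ 0 ∧ ν x = 0 ∧ x * σ x = y
  /-- the norm maps `1 + p_E^d` onto `1 + p_F^d` for every `d ≥ 1` -/
  norm_surj_one_add : ∀ d : ℤ, 1 ≤ d → ∀ y : E, σ y = y → (y - 1 = 0 ∨ d ≤ ν (y - 1)) →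
    ∃ x : E, (x - 1 = 0 ∨ d ≤ ν (x - 1)) ∧ x * σ x = y
  /-- the residue field of `F` has `q` elements -/
  residue_F : ∃ R : Finset E, R.card = q ∧ (∀ r ∈ R, σ r = r ∧ (r = 0 ∨ 0 ≤ ν r)) ∧
    ∀ x : E, σ x = x → (x = 0 ∨ 0 ≤ ν x) →
      ∃! r, r ∈ R ∧ (x - r = 0 ∨ 1 ≤ ν (x - r))
  /-- the residue field of `E` has `q²` elements -/
  residue_E : ∃ R : Finset E, R.card = q ^ 2 ∧ (∀ r ∈ R, r = 0 ∨ 0 ≤ ν r) ∧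
    ∀ x : E, (x = 0 ∨ 0 ≤ ν x) →
      ∃! r, r ∈ R ∧ (x - r = 0 ∨ 1 ≤ ν (x - r))
  /-- Hensel: a unit of `O_E` that is a square modulo `p_E` is a square (residue char. odd) -/
  hensel_sq : ∀ u w : E, u ≠ 0 → ν u = 0 → w ≠ 0 → ν w = 0 →
    (w * w - u = 0 ∨ 1 ≤ ν (w * w - u)) → ∃ v : E, v * v = u

namespace Setting

variable {E : Type*} [Field E] (S : Setting E)

/-- `x` lies in the ring of integers `O_E`. -/
def inOE (x : E) : Prop := x = 0 ∨ 0 ≤ S.ν x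

/-- `x` lies in the (fractional, if `d ≤ 0`) ideal `p_E^d`. -/
def inpE (d : ℤ) (x : E) : Prop := x = 0 ∨ d ≤ S.ν x

/-- `x` is a unit of `O_E`. -/
def unitOE (x : E) : Prop := x ≠ 0 ∧ S.ν x = 0

/-- `x` lies in the subfield `F` (the fixed field of `σ`). -/
def inF (x : E) : Prop := S.σ x = x

/-- `x` is a unit of `O_F`. -/
def unitOF (x : E) : Prop := S.σ x = x ∧ x ≠ 0 ∧ S.ν x = 0

/-- `x` lies in `E¹`, i.e. has norm one. -/
def normOne (x : E) : Prop := x * S.σ x = 1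

/-- `x ∈ √ε·F`. -/
def inSqεF (x : E) : Prop := ∃ f : E, S.σ f = f ∧ x = S.sqε * f

/-- Entrywise application of `σ` to a matrix, `ḡ`. -/
def mbar (g : Matrix (Fin 2) (Fin 2) E) : Matrix (Fin 2) (Fin 2) E :=
  Matrix.of fun i j => S.σ (g i j)

/-- The antidiagonal matrix `w = [[0,1],[1,0]]` defining the hermitian form. -/
def wmat (_S : Setting E) : Matrix (Fin 2) (Fin 2) E := !![0, 1; 1, 0]

/-- Membership in `G = U(1,1)(F) = {g : ḡᵀ·w·g = w}`. -/
def inG (g : Matrix (Fin 2) (Fin 2) E) : Prop :=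
  (S.mbar g)ᵀ * S.wmat * g = S.wmat

/-- `G = U(1,1)(F)`, as a set of 2×2 matrices over `E`. -/
def Gset : Set (Matrix (Fin 2) (Fin 2) E) := {g | S.inG g}

/-- `G_der = SU(1,1)(F) = {g ∈ G : det g = 1}`. -/
def Gder : Set (Matrix (Fin 2) (Fin 2) E) := {g | S.inG g ∧ g.det = 1}

/-- The standard maximal compact subgroup `K` of `G` (entries in `O_E`). -/
def Kset : Set (Matrix (Fin 2) (Fin 2) E) := {g | S.inG g ∧ ∀ i j, S.inOE (g i j)}

/-- The congruence subgroup `K_d = {k ∈ K : k − 1 ∈ p_E^d·M₂(O_E)}`. -/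
def Kfil (d : ℤ) : Set (Matrix (Fin 2) (Fin 2) E) :=
  {g | g ∈ S.Kset ∧ ∀ i j, S.inpE d ((g - 1) i j)}

/-- The subgroup `B` of upper triangular matrices in `K`. -/
def Bset : Set (Matrix (Fin 2) (Fin 2) E) := {g | g ∈ S.Kset ∧ g 1 0 = 0}

/-- The subgroup `B^op` of lower triangular matrices in `K`. -/
def Bop : Set (Matrix (Fin 2) (Fin 2) E) := {g | g ∈ S.Kset ∧ g 0 1 = 0}

/-- The center `Z = {z·I : z ∈ E¹}` of `G`. -/
def Zset : Set (Matrix (Fin 2) (Fin 2) E) :=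
  {g | ∃ z : E, S.normOne z ∧ g = z • (1 : Matrix (Fin 2) (Fin 2) E)}

/-- The matrix `α^t = diag(ϖ^{−t}, ϖ^t)`. -/
def αmat (t : ℕ) : Matrix (Fin 2) (Fin 2) E := !![(S.ϖ ^ t)⁻¹, 0; 0, S.ϖ ^ t]

/-- The matrix `η = diag(1, ϖ)` (it normalizes `G`). -/
def ηmat : Matrix (Fin 2) (Fin 2) E := !![1, 0; 0, S.ϖ]

/-- The matrix `η⁻¹ = diag(1, ϖ⁻¹)`. -/
def ηinv : Matrix (Fin 2) (Fin 2) E := !![1, 0; 0, S.ϖ⁻¹]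

/-- The torus `T_{γ₁,γ₂} = {[[a,bγ₁],[bγ₂,a]] : a·ā + b·b̄·γ₁γ₂ = 1, ā·b ∈ √ε·F}`. -/
def Tset (γ₁ γ₂ : E) : Set (Matrix (Fin 2) (Fin 2) E) :=
  {g | ∃ a b : E, g = !![a, b * γ₁; b * γ₂, a] ∧
    a * S.σ a + b * S.σ b * (γ₁ * γ₂) = 1 ∧ S.inSqεF (S.σ a * b)}

/-- The Moy–Prasad filtration subgroup `G_{y,r}` of `G` (for `r > 0`). -/
def Gfil (y r : ℚ) : Set (Matrix (Fin 2) (Fin 2) E) :=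
  {g | S.inG g ∧ S.inpE ⌈r⌉ (g 0 0 - 1) ∧ S.inpE ⌈r⌉ (g 1 1 - 1) ∧
    S.inpE ⌈r - y⌉ (g 0 1) ∧ S.inpE ⌈r + y⌉ (g 1 0)}

/-- `G_{y,0+} = ⋃_{r>0} G_{y,r}`. -/
def Gfil0plus (y : ℚ) : Set (Matrix (Fin 2) (Fin 2) E) :=
  {g | ∃ r : ℚ, 0 < r ∧ g ∈ S.Gfil y r}

end Setting


/-!
For `u, v ∈ K` the entry `(u⁻¹v)₁₀` is `⟨u e₁, v e₁⟩` for the hermitian form of `w`, and an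
element `k ∈ K` lies in `B·K_d` iff `k₁₀ ∈ p_E^d`. So the coset `k·B·K_d` is determined by the
isotropic first column of `k` modulo `p_E^d`. Up to a unit this column is `(1, t)` or `(a, 1)` with
`t, a` of trace zero and `a ∈ p_E`, i.e. `t ∈ √ε·O_F` and `a ∈ √ε·p_F`; counting these modulo
`p_E^d` by their `ϖ`-adic digits gives `q^d + q^{d-1}` cosets.
-/

theorem Subgroup.relIndex_eq_natCard_of_cosetReps {G T : Type*} [Group G] {H K : Subgroup G}
    (e : T → G) (he : ∀ t, e t ∈ K) (hinj : ∀ t t', (e t)⁻¹ * e t' ∈ H → t = t')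
    (hsurj : ∀ k ∈ K, ∃ t, (e t)⁻¹ * k ∈ H) : H.relIndex K = Nat.card T := by
  rw [Subgroup.relIndex, Subgroup.index_eq_card]
  refine (Nat.card_eq_of_bijective
    (fun t => (QuotientGroup.mk ⟨e t, he t⟩ : K ⧸ H.subgroupOf K)) ⟨?_, ?_⟩).symm
  · intro t t' h
    exact hinj t t' (by simpa [QuotientGroup.eq, Subgroup.mem_subgroupOf] using h)
  · refine fun q => QuotientGroup.induction_on q fun k => ?_
    obtain ⟨t, ht⟩ := hsurj k k.2
    exact ⟨t, QuotientGroup.eq.2 (by simpa [Subgroup.mem_subgroupOf] using ht)⟩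

namespace Setting

variable {E : Type*} [Field E] (S : Setting E)

theorem ν_one : S.ν 1 = 0 := by
  simpa using (S.ν_mul (one_ne_zero' E) one_ne_zero).symm

theorem ν_neg_one : S.ν (-1) = 0 := by
  have h := S.ν_mul (neg_ne_zero.2 (one_ne_zero' E)) (neg_ne_zero.2 one_ne_zero)
  rw [neg_mul_neg, one_mul, ν_one] at h
  omega

theorem ν_ϖ_pow (m : ℕ) : S.ν (S.ϖ ^ m) = m := by
  induction m with
  | zero => simpa using S.ν_one
  | succ m ih =>
    rw [pow_succ, S.ν_mul (pow_ne_zero _ S.ϖ_ne_zero) S.ϖ_ne_zero, ih, S.ν_ϖ]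
    push_cast; ring

theorem sqε_ne_zero : S.sqε ≠ 0 := by
  rintro h
  exact S.ε_ne_zero (by rw [← S.sqε_sq, h, mul_zero])

theorem ν_sqε_mul_ϖ_pow (m : ℕ) : S.ν (S.sqε * S.ϖ ^ m) = m := by
  have h := S.ν_mul S.sqε_ne_zero S.sqε_ne_zero
  rw [S.sqε_sq, S.ν_ε] at h
  rw [S.ν_mul S.sqε_ne_zero (pow_ne_zero _ S.ϖ_ne_zero), ν_ϖ_pow]
  omega

theorem σ_sqε_mul_ϖ_pow (m : ℕ) : S.σ (S.sqε * S.ϖ ^ m) = -(S.sqε * S.ϖ ^ m) := by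
  rw [map_mul, map_pow, S.sqε_conj, S.ϖ_fixed, neg_mul]

theorem sqε_mul_ϖ_pow_ne_zero (m : ℕ) : S.sqε * S.ϖ ^ m ≠ 0 :=
  mul_ne_zero S.sqε_ne_zero (pow_ne_zero _ S.ϖ_ne_zero)

theorem unitOE_one : S.unitOE 1 := ⟨one_ne_zero, S.ν_one⟩

theorem inOE_one : S.inOE 1 := Or.inr S.unitOE_one.2.ge

theorem inpE_zero (k : ℤ) : S.inpE k 0 := Or.inl rfl

theorem inpE_mono {k l : ℤ} (hkl : k ≤ l) {x : E} (h : S.inpE l x) : S.inpE k x :=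
  h.imp_right hkl.trans

theorem inpE_mul {k l : ℤ} {x y : E} (hx : S.inpE k x) (hy : S.inpE l y) :
    S.inpE (k + l) (x * y) := by
  rcases eq_or_ne x 0 with rfl | hx0
  · simpa using S.inpE_zero _
  rcases eq_or_ne y 0 with rfl | hy0
  · simpa using S.inpE_zero _
  refine Or.inr ?_
  rw [S.ν_mul hx0 hy0]
  exact add_le_add (hx.resolve_left hx0) (hy.resolve_left hy0)

theorem inpE_mul_inOE {k : ℤ} {x y : E} (hx : S.inpE k x) (hy : S.inOE y) :
    S.inpE k (x * y) := by
  simpa using S.inpE_mul hx hy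

theorem inOE_mul_inpE {k : ℤ} {x y : E} (hx : S.inOE x) (hy : S.inpE k y) :
    S.inpE k (x * y) := by
  simpa using S.inpE_mul hx hy

theorem inpE_mul_iff {x : E} (hx : x ≠ 0) {k : ℤ} {y : E} :
    S.inpE (S.ν x + k) (x * y) ↔ S.inpE k y := by
  rcases eq_or_ne y 0 with rfl | hy
  · simp [inpE]
  simp [inpE, hx, hy, S.ν_mul hx hy]

theorem inpE_unit_mul_iff {x : E} (hx : S.unitOE x) {k : ℤ} {y : E} :
    S.inpE k (x * y) ↔ S.inpE k y := by
  simpa [hx.2] using S.inpE_mul_iff hx.1 (k := k) (y := y)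

theorem inpE_add {k : ℤ} {x y : E} (hx : S.inpE k x) (hy : S.inpE k y) :
    S.inpE k (x + y) := by
  rcases eq_or_ne x 0 with rfl | hx0
  · simpa using hy
  rcases eq_or_ne y 0 with rfl | hy0
  · simpa using hx
  rcases eq_or_ne (x + y) 0 with hxy | hxy
  · exact Or.inl hxy
  exact Or.inr
    ((le_min (hx.resolve_left hx0) (hy.resolve_left hy0)).trans (S.ν_add hx0 hy0 hxy))

theorem inpE_neg {k : ℤ} {x : E} (hx : S.inpE k x) : S.inpE k (-x) := by
  simpa using (S.inpE_unit_mul_iff ⟨neg_ne_zero.2 one_ne_zero, S.ν_neg_one⟩).2 hx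

theorem inpE_sub {k : ℤ} {x y : E} (hx : S.inpE k x) (hy : S.inpE k y) :
    S.inpE k (x - y) := by
  simpa [sub_eq_add_neg] using S.inpE_add hx (S.inpE_neg hy)

theorem unitOE_of_not_inpE_one {x : E} (hx : S.inOE x) (h : ¬ S.inpE 1 x) : S.unitOE x := by
  rcases hx with rfl | hx
  · exact absurd (S.inpE_zero 1) h
  have hx0 : x ≠ 0 := fun h0 => h (Or.inl h0)
  exact ⟨hx0, le_antisymm (not_lt.1 fun hlt => h (Or.inr hlt)) hx⟩

theorem not_inpE_of_unitOE {x : E} (hx : S.unitOE x) {k : ℤ} (hk : 1 ≤ k) : ¬ S.inpE k x := by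
  rintro (h | h)
  · exact hx.1 h
  · have := hx.2; omega

theorem not_inpE_one_sub {z : E} (hz : S.inpE 1 z) {k : ℤ} (hk : 1 ≤ k) :
    ¬ S.inpE k (1 - z) := fun h =>
  S.not_inpE_of_unitOE S.unitOE_one le_rfl (by simpa using S.inpE_add (S.inpE_mono hk h) hz)

theorem σ_div_eq_neg {x y : E} (hx : x ≠ 0) (h : S.σ y * x + S.σ x * y = 0) :
    S.σ (y / x) = -(y / x) := by
  have hσx : S.σ x ≠ 0 := fun h0 => hx (by simpa [S.σσ] using congrArg S.σ h0)
  rw [map_div₀]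
  field_simp
  linear_combination h

def IsResidueSystem (RF : Finset E) : Prop :=
  (∀ r ∈ RF, S.inF r ∧ S.inOE r) ∧ ∀ x, S.inF x → S.inOE x → ∃! r, r ∈ RF ∧ S.inpE 1 (x - r)

def digitSum {RF : Finset E} {n : ℕ} (c : Fin n → RF) : E :=
  ∑ i, (c i : E) * S.ϖ ^ (i : ℕ)

variable {S} {RF : Finset E}

theorem digitSum_succ {n : ℕ} (c : Fin (n + 1) → RF) :
    S.digitSum c = c 0 + S.ϖ * S.digitSum (Fin.tail c) := by
  simp only [digitSum, Fin.sum_univ_succ, Finset.mul_sum, Fin.tail, Fin.val_succ, pow_succ]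
  simp only [Fin.val_zero, pow_zero, mul_one]
  congr 1
  exact Finset.sum_congr rfl fun i _ => by ring

theorem IsResidueSystem.inF_digitSum (hRF : S.IsResidueSystem RF) {n : ℕ} (c : Fin n → RF) :
    S.inF (S.digitSum c) := by
  simp only [inF, digitSum, map_sum, map_mul, map_pow, S.ϖ_fixed]
  exact Finset.sum_congr rfl fun i _ => by rw [(hRF.1 _ (c i).2).1]

theorem IsResidueSystem.inOE_digitSum (hRF : S.IsResidueSystem RF) {n : ℕ} (c : Fin n → RF) :
    S.inOE (S.digitSum c) :=
  Finset.sum_induction _ _ (fun _ _ => S.inpE_add) (S.inpE_zero 0) fun i _ =>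
    S.inpE_mul_inOE (hRF.1 _ (c i).2).2 (Or.inr (by rw [S.ν_ϖ_pow]; positivity))

theorem IsResidueSystem.exists_digitSum (hRF : S.IsResidueSystem RF) (n : ℕ) {f : E}
    (hf : S.inF f) (hfO : S.inOE f) : ∃ c : Fin n → RF, S.inpE n (f - S.digitSum c) := by
  induction n generalizing f with
  | zero => exact ⟨Fin.elim0, by simpa [digitSum, inOE, inpE] using hfO⟩
  | succ n ih =>
    obtain ⟨r, ⟨hr, hfr⟩, -⟩ := hRF.2 f hf hfO
    set f' := (f - r) / S.ϖ
    have hfr' : f - r = S.ϖ * f' := (mul_div_cancel₀ _ S.ϖ_ne_zero).symm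
    have hf' : S.inF f' := by
      rw [inF, map_div₀, map_sub, (hf : S.σ f = f), (hRF.1 r hr).1, S.ϖ_fixed]
    obtain ⟨c, hc⟩ := ih hf' ((S.inpE_mul_iff S.ϖ_ne_zero).1 (by rwa [S.ν_ϖ, ← hfr']))
    refine ⟨Fin.cons ⟨r, hr⟩ c, ?_⟩
    rw [digitSum_succ, Fin.cons_zero, Fin.tail_cons,
      show f - (r + S.ϖ * S.digitSum c) = S.ϖ * (f' - S.digitSum c) by
        rw [← sub_sub, hfr']; ring]
    simpa [S.ν_ϖ, add_comm] using (S.inpE_mul_iff S.ϖ_ne_zero).2 hc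

theorem IsResidueSystem.digitSum_injective (hRF : S.IsResidueSystem RF) {n : ℕ}
    {c c' : Fin n → RF} (h : S.inpE n (S.digitSum c - S.digitSum c')) : c = c' := by
  induction n with
  | zero => exact funext fun i => i.elim0
  | succ n ih =>
    rw [digitSum_succ, digitSum_succ,
      show ∀ a b x y : E, a + S.ϖ * x - (b + S.ϖ * y) = (a - b) + S.ϖ * (x - y) by
        intros; ring] at h
    have htail : S.inpE 1 (S.ϖ * (S.digitSum (Fin.tail c) - S.digitSum (Fin.tail c'))) := by
      simpa [S.ν_ϖ] using (S.inpE_mul_iff S.ϖ_ne_zero).2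
        (S.inpE_sub (hRF.inOE_digitSum _) (hRF.inOE_digitSum _))
    have h0 : c 0 = c' 0 := by
      have hres : S.inpE 1 ((c 0 : E) - c' 0) := by
        simpa using S.inpE_sub (S.inpE_mono (by omega) h) htail
      obtain ⟨s, -, hs⟩ := hRF.2 _ (hRF.1 _ (c 0).2).1 (hRF.1 _ (c 0).2).2
      exact Subtype.ext ((hs _ ⟨(c 0).2, by simpa using S.inpE_zero 1⟩).trans
        (hs _ ⟨(c' 0).2, hres⟩).symm)
    rw [h0, sub_self, zero_add] at h
    have := ih ((S.inpE_mul_iff S.ϖ_ne_zero).1 (by simpa [S.ν_ϖ, add_comm] using h))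
    rw [← Fin.cons_self_tail c, ← Fin.cons_self_tail c', h0, this]

variable (S) in
def skewDigitSum {n : ℕ} (m : ℕ) (c : Fin n → RF) : E :=
  S.sqε * S.ϖ ^ m * S.digitSum c

theorem exists_eq_sqε_mul_ϖ_pow_mul {m : ℕ} {t : E} (ht : S.σ t = -t) (htm : S.inpE m t) :
    ∃ f, S.inF f ∧ S.inOE f ∧ t = S.sqε * S.ϖ ^ m * f := by
  have hu := S.sqε_mul_ϖ_pow_ne_zero m
  have htf : t = S.sqε * S.ϖ ^ m * (t / (S.sqε * S.ϖ ^ m)) := (mul_div_cancel₀ _ hu).symm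
  refine ⟨t / (S.sqε * S.ϖ ^ m), ?_, (S.inpE_mul_iff hu).1 ?_, htf⟩
  · rw [inF, map_div₀, ht, S.σ_sqε_mul_ϖ_pow, neg_div_neg_eq]
  · rwa [← htf, S.ν_sqε_mul_ϖ_pow, add_zero]

theorem IsResidueSystem.σ_skewDigitSum (hRF : S.IsResidueSystem RF) {n : ℕ} (m : ℕ)
    (c : Fin n → RF) : S.σ (S.skewDigitSum m c) = -S.skewDigitSum m c := by
  rw [skewDigitSum, map_mul, S.σ_sqε_mul_ϖ_pow, hRF.inF_digitSum, neg_mul]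

theorem IsResidueSystem.inpE_skewDigitSum (hRF : S.IsResidueSystem RF) {n : ℕ} (m : ℕ)
    (c : Fin n → RF) : S.inpE m (S.skewDigitSum m c) := by
  simpa [skewDigitSum, S.ν_sqε_mul_ϖ_pow] using
    (S.inpE_mul_iff (S.sqε_mul_ϖ_pow_ne_zero m) (k := 0)).2 (hRF.inOE_digitSum c)

theorem IsResidueSystem.exists_skewDigitSum (hRF : S.IsResidueSystem RF) {m : ℕ} (n : ℕ)
    {t : E} (ht : S.σ t = -t) (htm : S.inpE m t) :
    ∃ c : Fin n → RF, S.inpE (m + n : ℕ) (t - S.skewDigitSum m c) := by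
  obtain ⟨f, hf, hfO, rfl⟩ := exists_eq_sqε_mul_ϖ_pow_mul ht htm
  obtain ⟨c, hc⟩ := hRF.exists_digitSum n hf hfO
  refine ⟨c, ?_⟩
  rw [skewDigitSum, ← mul_sub, Nat.cast_add, ← S.ν_sqε_mul_ϖ_pow]
  exact (S.inpE_mul_iff (S.sqε_mul_ϖ_pow_ne_zero m)).2 hc

theorem IsResidueSystem.skewDigitSum_injective (hRF : S.IsResidueSystem RF) {m n : ℕ}
    {c c' : Fin n → RF} (h : S.inpE (m + n : ℕ) (S.skewDigitSum m c - S.skewDigitSum m c')) :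
    c = c' := by
  rw [skewDigitSum, skewDigitSum, ← mul_sub, Nat.cast_add, ← S.ν_sqε_mul_ϖ_pow] at h
  exact hRF.digitSum_injective ((S.inpE_mul_iff (S.sqε_mul_ϖ_pow_ne_zero m)).1 h)

theorem IsResidueSystem.exists_skewDigitSum_mul (hRF : S.IsResidueSystem RF) {m : ℕ} (n : ℕ)
    {x y : E} (hx : S.unitOE x) (hxy : S.σ y * x + S.σ x * y = 0) (hy : S.inpE m y) :
    ∃ c : Fin n → RF, S.inpE (m + n : ℕ) (y - S.skewDigitSum m c * x) := by
  have hyx : y = x * (y / x) := (mul_div_cancel₀ _ hx.1).symm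
  obtain ⟨c, hc⟩ := hRF.exists_skewDigitSum n (S.σ_div_eq_neg hx.1 hxy)
    ((S.inpE_unit_mul_iff hx).1 (hyx ▸ hy))
  refine ⟨c, ?_⟩
  rw [hyx, show x * (y / x) - S.skewDigitSum m c * x = x * (y / x - S.skewDigitSum m c) by ring]
  exact (S.inpE_unit_mul_iff hx).2 hc

variable (S) in
/-- The hermitian form `x̄ᵀ w y` defining `G`. -/
def wForm (x y : Fin 2 → E) : E := S.σ (x 1) * y 0 + S.σ (x 0) * y 1

theorem inG_iff {g : Matrix (Fin 2) (Fin 2) E} :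
    S.inG g ↔ ∀ i j, S.wForm (gᵀ i) (gᵀ j) = S.wmat i j := by
  simp [inG, mbar, wForm, ← Matrix.ext_iff, Matrix.mul_apply, Fin.sum_univ_two, wmat]

theorem mbar_mul (g h : Matrix (Fin 2) (Fin 2) E) : S.mbar (g * h) = S.mbar g * S.mbar h :=
  Matrix.map_mul (f := S.σ)

theorem inG_mul {g h : Matrix (Fin 2) (Fin 2) E} (hg : S.inG g) (hh : S.inG h) :
    S.inG (g * h) := by
  rw [inG, mbar_mul, Matrix.transpose_mul]
  calc (S.mbar h)ᵀ * (S.mbar g)ᵀ * S.wmat * (g * h)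
      = (S.mbar h)ᵀ * ((S.mbar g)ᵀ * S.wmat * g) * h := by simp only [Matrix.mul_assoc]
    _ = S.wmat := by rw [hg, hh]

theorem mul_unitaryInv_eq_one {g : Matrix (Fin 2) (Fin 2) E} (hg : S.inG g) :
    g * !![S.σ (g 1 1), S.σ (g 0 1); S.σ (g 1 0), S.σ (g 0 0)] = 1 := by
  have hinv : S.wmat * (S.mbar g)ᵀ * S.wmat =
      !![S.σ (g 1 1), S.σ (g 0 1); S.σ (g 1 0), S.σ (g 0 0)] := by
    ext i j
    fin_cases i <;> fin_cases j <;>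
      simp [wmat, mbar, Matrix.mul_apply, Matrix.vecMul, dotProduct, Fin.sum_univ_two]
  have hw : S.wmat * S.wmat = 1 := by simp [wmat, Matrix.one_fin_two]
  rw [← hinv, mul_eq_one_comm]
  calc S.wmat * (S.mbar g)ᵀ * S.wmat * g = S.wmat * ((S.mbar g)ᵀ * S.wmat * g) := by
        simp only [Matrix.mul_assoc]
    _ = 1 := by rw [hg, hw]

theorem inv_mul_apply_one_zero {u : GL (Fin 2) E} (hu : S.inG u) (v : GL (Fin 2) E) :
    ((u⁻¹ * v : GL (Fin 2) E) : Matrix (Fin 2) (Fin 2) E) 1 0 =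
      S.wForm ((u : Matrix (Fin 2) (Fin 2) E)ᵀ 0) ((v : Matrix (Fin 2) (Fin 2) E)ᵀ 0) := by
  rw [Units.val_mul, Units.inv_eq_of_mul_eq_one_right (mul_unitaryInv_eq_one hu)]
  simp [Matrix.mul_apply, Fin.sum_univ_two, wForm]

theorem unitOE_det {g : Matrix (Fin 2) (Fin 2) E} (hg : S.inG g) : S.unitOE g.det := by
  have h : g.det * S.σ g.det = 1 := by
    have hm : (S.mbar g).det = S.σ g.det := (RingHom.map_det S.σ g).symm
    have := congrArg Matrix.det hg
    rw [Matrix.det_mul, Matrix.det_mul, Matrix.det_transpose, hm] at this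
    simp only [wmat, Matrix.det_fin_two_of] at this
    linear_combination -this
  have hdet : g.det ≠ 0 := left_ne_zero_of_mul_eq_one h
  refine ⟨hdet, ?_⟩
  have := S.ν_mul hdet (right_ne_zero_of_mul_eq_one h)
  rw [h, S.ν_one, S.ν_σ] at this
  omega

theorem Kset_mul {g h : Matrix (Fin 2) (Fin 2) E} (hg : g ∈ S.Kset) (hh : h ∈ S.Kset) :
    g * h ∈ S.Kset :=
  ⟨inG_mul hg.1 hh.1, fun i j => by
    rw [Matrix.mul_apply, Fin.sum_univ_two]
    exact S.inpE_add (S.inpE_mul_inOE (hg.2 i 0) (hh.2 0 j))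
      (S.inpE_mul_inOE (hg.2 i 1) (hh.2 1 j))⟩

theorem det_not_inpE_one {g : Matrix (Fin 2) (Fin 2) E} (hg : g ∈ S.Kset) :
    ¬ S.inpE 1 g.det :=
  S.not_inpE_of_unitOE (unitOE_det hg.1) le_rfl

theorem lowerUnipotent_mem_Kfil {d : ℤ} (hd : 0 ≤ d) {t : E} (ht : S.σ t = -t)
    (htd : S.inpE d t) : !![1, 0; t, 1] ∈ S.Kfil d := by
  refine ⟨⟨inG_iff.2 ?_, ?_⟩, ?_⟩
  · simp [Fin.forall_fin_two, wForm, wmat, ht]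
  · simp only [Fin.forall_fin_two]
    simpa [S.inOE_one] using ⟨S.inpE_zero 0, S.inpE_mono hd htd⟩
  · simp [Fin.forall_fin_two, S.inpE_zero d, htd]

theorem antidiag_mem_Kset {a : E} (ha : S.σ a = -a) (haO : S.inOE a) :
    !![a, 1; 1, 0] ∈ S.Kset := by
  refine ⟨inG_iff.2 ?_, ?_⟩
  · simp [Fin.forall_fin_two, wForm, wmat, ha]
  · simp only [Fin.forall_fin_two]
    exact ⟨⟨haO, S.inOE_one⟩, S.inOE_one, S.inpE_zero 0⟩

theorem mem_Bset_mul_Kfil_iff {d : ℤ} (hd : 1 ≤ d) {h : Matrix (Fin 2) (Fin 2) E}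
    (hh : h ∈ S.Kset) : h ∈ S.Bset * S.Kfil d ↔ S.inpE d (h 1 0) := by
  constructor
  · intro hbk
    obtain ⟨b, hb, k, hk, rfl⟩ := Set.mem_mul.1 hbk
    have h10 : (b * k) 1 0 = b 1 1 * (k - 1) 1 0 := by
      simp [Matrix.mul_apply, Fin.sum_univ_two, hb.2]
    rw [h10]
    exact S.inOE_mul_inpE (hb.1.2 1 1) (hk.2 1 0)
  · intro h10
    have h11 : S.unitOE (h 1 1) := S.unitOE_of_not_inpE_one (hh.2 1 1) fun h11 =>
      det_not_inpE_one hh <| by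
        rw [Matrix.det_fin_two]
        exact S.inpE_sub (S.inOE_mul_inpE (hh.2 0 0) h11)
          (S.inOE_mul_inpE (hh.2 0 1) (S.inpE_mono hd h10))
    have hrow : S.σ (h 1 0) * h 1 1 + S.σ (h 1 1) * h 1 0 = 0 := by
      have := congrFun (congrFun (mul_unitaryInv_eq_one hh.1) 1) 0
      simp only [Matrix.mul_apply, Fin.sum_univ_two, Matrix.of_apply, Matrix.cons_val',
        Matrix.cons_val_zero, Matrix.cons_val_one, Matrix.cons_val_fin_one, Matrix.one_apply_ne
          one_ne_zero] at this
      linear_combination this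
    -- `h = (h·L(-t))·L(t)` for the lower unipotent `L(t)`, `t = h₁₀/h₁₁`; `t` has trace zero
    -- because the second row of `h` is isotropic.
    set t := h 1 0 / h 1 1
    have ht : S.σ t = -t := S.σ_div_eq_neg h11.1 hrow
    have htd : S.inpE d t := (S.inpE_unit_mul_iff h11).1 (by rwa [mul_div_cancel₀ _ h11.1])
    have hLt := lowerUnipotent_mem_Kfil (by omega) ht htd
    have hLnegt := lowerUnipotent_mem_Kfil (by omega) (by rw [map_neg, ht]) (S.inpE_neg htd)
    refine ⟨h * !![1, 0; -t, 1], ⟨Kset_mul hh hLnegt.1, ?_⟩, !![1, 0; t, 1], hLt, ?_⟩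
    · simp [Matrix.mul_apply, Fin.sum_univ_two, t, mul_div_cancel₀ _ h11.1]
    · simp [Matrix.mul_assoc, ← Matrix.one_fin_two]

variable (S) in
/-- Representatives of `K / B·K_{n+1}`: `[[1,0],[t,1]]` with `t ∈ √ε·O_F / p^{n+1}` (`q^{n+1}` of
them) and `[[a,1],[1,0]]` with `a ∈ √ε·ϖ·O_F / p^{n+1}` (`q^n` of them). -/
def cosetRep (RF : Finset E) (n : ℕ) : (Fin (n + 1) → RF) ⊕ (Fin n → RF) → GL (Fin 2) E :=
  Sum.elim (fun c => .mkOfDetNeZero !![1, 0; S.skewDigitSum 0 c, 1] (by simp))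
    (fun c => .mkOfDetNeZero !![S.skewDigitSum 1 c, 1; 1, 0] (by simp))

theorem IsResidueSystem.cosetRep_mem_Kset (hRF : S.IsResidueSystem RF) {n : ℕ}
    (t : (Fin (n + 1) → RF) ⊕ (Fin n → RF)) :
    (S.cosetRep RF n t : Matrix (Fin 2) (Fin 2) E) ∈ S.Kset := by
  rcases t with c | c
  · have h := hRF.inpE_skewDigitSum 0 c
    rw [Nat.cast_zero] at h
    exact (lowerUnipotent_mem_Kfil le_rfl (hRF.σ_skewDigitSum 0 c) h).1
  · exact antidiag_mem_Kset (hRF.σ_skewDigitSum 1 c)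
      (S.inpE_mono zero_le_one (by simpa using hRF.inpE_skewDigitSum 1 c))

theorem IsResidueSystem.cosetRep_eq_of_inpE (hRF : S.IsResidueSystem RF) {n : ℕ}
    {t t' : (Fin (n + 1) → RF) ⊕ (Fin n → RF)}
    (h : S.inpE (n + 1 : ℕ) (S.wForm ((S.cosetRep RF n t : Matrix (Fin 2) (Fin 2) E)ᵀ 0)
      ((S.cosetRep RF n t' : Matrix (Fin 2) (Fin 2) E)ᵀ 0))) : t = t' := by
  have hO (c : Fin (n + 1) → RF) : S.inOE (S.skewDigitSum 0 c) := by
    have h := hRF.inpE_skewDigitSum 0 c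
    rwa [Nat.cast_zero] at h
  have hp (c : Fin n → RF) : S.inpE 1 (S.skewDigitSum 1 c) := by
    simpa using hRF.inpE_skewDigitSum 1 c
  rcases t with c | c <;> rcases t' with c' | c' <;>
    simp only [cosetRep, wForm, Sum.elim_inl, Sum.elim_inr,
      Matrix.GeneralLinearGroup.val_mkOfDetNeZero, Matrix.transpose_apply, Matrix.of_apply,
      Matrix.cons_val', Matrix.cons_val_zero, Matrix.cons_val_one, Matrix.empty_val',
      Matrix.cons_val_fin_one, hRF.σ_skewDigitSum, map_one, mul_one, one_mul, neg_mul,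
      neg_add_eq_sub, ← sub_eq_add_neg] at h
  · exact congrArg _ (hRF.skewDigitSum_injective (m := 0) (by simpa using h)).symm
  · exact absurd h (S.not_inpE_one_sub (S.inOE_mul_inpE (hO c) (hp c')) (by omega))
  · exact absurd h (S.not_inpE_one_sub (S.inpE_mul_inOE (hp c) (hO c')) (by omega))
  · exact congrArg _
      (hRF.skewDigitSum_injective (m := 1) (by simpa [add_comm] using h)).symm

theorem IsResidueSystem.exists_cosetRep (hRF : S.IsResidueSystem RF) (n : ℕ)
    {k : Matrix (Fin 2) (Fin 2) E} (hk : k ∈ S.Kset) :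
    ∃ t, S.inpE (n + 1 : ℕ)
      (S.wForm ((S.cosetRep RF n t : Matrix (Fin 2) (Fin 2) E)ᵀ 0) (kᵀ 0)) := by
  have hiso : S.σ (k 1 0) * k 0 0 + S.σ (k 0 0) * k 1 0 = 0 := by
    simpa [wForm, wmat] using inG_iff.1 hk.1 0 0
  by_cases h00 : S.inpE 1 (k 0 0)
  · have h10 : S.unitOE (k 1 0) := S.unitOE_of_not_inpE_one (hk.2 1 0) fun h10 =>
      det_not_inpE_one hk <| by
        rw [Matrix.det_fin_two]
        exact S.inpE_sub (S.inpE_mul_inOE h00 (hk.2 1 1)) (S.inOE_mul_inpE (hk.2 0 1) h10)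
    obtain ⟨c, hc⟩ := hRF.exists_skewDigitSum_mul (m := 1) (y := k 0 0) n h10
      (by linear_combination hiso) (by simpa using h00)
    refine ⟨.inr c, ?_⟩
    simpa [cosetRep, wForm, hRF.σ_skewDigitSum, add_comm, ← sub_eq_add_neg] using hc
  · obtain ⟨c, hc⟩ := hRF.exists_skewDigitSum_mul (m := 0) (n + 1)
      (S.unitOE_of_not_inpE_one (hk.2 0 0) h00) hiso (hk.2 1 0)
    refine ⟨.inl c, ?_⟩
    simpa [cosetRep, wForm, hRF.σ_skewDigitSum, add_comm, ← sub_eq_add_neg] using hc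

end Setting

/-- For every integer `d > 0`, the subgroup `B·K_d` has index
`(q+1)·q^{d−1}` in `K`. -/
theorem statement10 {E : Type*} [Field E] (S : Setting E) (d : ℕ) (hd : 0 < d)
    (Ksub BKd : Subgroup (Matrix.GeneralLinearGroup (Fin 2) E))
    (hKsub : ∀ g : Matrix.GeneralLinearGroup (Fin 2) E,
      g ∈ Ksub ↔ (g : Matrix (Fin 2) (Fin 2) E) ∈ S.Kset)
    (hBKd : ∀ g : Matrix.GeneralLinearGroup (Fin 2) E,
      g ∈ BKd ↔ (g : Matrix (Fin 2) (Fin 2) E) ∈ S.Bset * S.Kfil d) :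
    BKd.relIndex Ksub = (S.q + 1) * S.q ^ (d - 1) := by
  obtain ⟨n, rfl⟩ : ∃ n, d = n + 1 := ⟨d - 1, by omega⟩
  obtain ⟨RF, hcard, hRF⟩ := S.residue_F
  replace hRF : S.IsResidueSystem RF := hRF
  have hK (g) (hg : g ∈ Ksub) := (hKsub g).1 hg
  have hcoset : ∀ u ∈ Ksub, ∀ v ∈ Ksub, u⁻¹ * v ∈ BKd ↔ S.inpE (n + 1 : ℕ)
      (S.wForm ((u : Matrix (Fin 2) (Fin 2) E)ᵀ 0) ((v : Matrix (Fin 2) (Fin 2) E)ᵀ 0)) := by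
    intro u hu v hv
    rw [hBKd, S.mem_Bset_mul_Kfil_iff (by omega) (hK _ (mul_mem (inv_mem hu) hv)),
      Setting.inv_mul_apply_one_zero (hK u hu).1]
  have hrep t := (hKsub _).2 (hRF.cosetRep_mem_Kset (n := n) t)
  rw [Subgroup.relIndex_eq_natCard_of_cosetReps (S.cosetRep RF n) hrep
    (fun t t' h => hRF.cosetRep_eq_of_inpE ((hcoset _ (hrep t) _ (hrep t')).1 h))
    (fun k hk => (hRF.exists_cosetRep n (hK k hk)).imp fun t ht => (hcoset _ (hrep t) _ hk).2 ht)]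
  rw [Nat.card_sum, Nat.card_fun, Nat.card_fun, Nat.card_eq_finsetCard, hcard, Nat.card_fin,
    Nat.card_fin, add_tsub_cancel_right]
  ring
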